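/- For an invertible endomorphism g of a finite-dimensional real vector space, each multiplicative Jordan component e, h, u of g = ehu is a real polynomial in g. -/

import Mathlib

open TensorProduct

/-- An endomorphism of a vector space over `K` is diagonalizable if its eigenspaces span. -/
def IsDiag {K M : Type*} [Field K] [AddCommGroup M] [Module K M]
    (f : Module.End K M) : Prop :=
  (⨆ μ : K, f.eigenspace μ) = ⊤

/-- The complexification of a real endomorphism, acting on `ℂ ⊗[ℝ] V`. -/
noncomputable def cplx {V : Type*} [AddCommGroup V] [Module ℝ V]
    (X : Module.End ℝ V) : Module.End ℂ (ℂ ⊗[ℝ] V) :=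
  LinearMap.baseChange ℂ X

/-- `X` is (additively) elliptic: semisimple with purely imaginary eigenvalues. -/
noncomputable def IsElliptic {V : Type*} [AddCommGroup V] [Module ℝ V]
    (X : Module.End ℝ V) : Prop :=
  IsDiag (cplx X) ∧ ∀ μ : ℂ, (cplx X).HasEigenvalue μ → μ.re = 0

/-- `X` is (additively) hyperbolic: semisimple with real eigenvalues. -/
noncomputable def IsHyperbolic {V : Type*} [AddCommGroup V] [Module ℝ V]
    (X : Module.End ℝ V) : Prop :=
  IsDiag (cplx X) ∧ ∀ μ : ℂ, (cplx X).HasEigenvalue μ → μ.im = 0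

/-- `g` is (multiplicatively) elliptic: semisimple with eigenvalues of absolute value one. -/
noncomputable def IsMultElliptic {V : Type*} [AddCommGroup V] [Module ℝ V]
    (g : Module.End ℝ V) : Prop :=
  IsDiag (cplx g) ∧ ∀ μ : ℂ, (cplx g).HasEigenvalue μ → ‖μ‖ = 1

/-- `g` is (multiplicatively) hyperbolic: semisimple with positive real eigenvalues. -/
noncomputable def IsMultHyperbolic {V : Type*} [AddCommGroup V] [Module ℝ V]
    (g : Module.End ℝ V) : Prop :=
  IsDiag (cplx g) ∧ ∀ μ : ℂ, (cplx g).HasEigenvalue μ → μ.im = 0 ∧ 0 < μ.re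


/-!
Put `s = e h`. After complexification `s` is semisimple, being a product of commuting
diagonalizable maps, and `g - s = s (u - 1)` is nilpotent and commutes with `s`; by uniqueness
of the Jordan–Chevalley decomposition, `s` is the semisimple part of `g`, hence a polynomial in `g`.
Since the inverse of `s` is a polynomial in `s`, so is `u = s⁻¹ g`. On a joint eigenvector of `e`
and `h` with eigenvalues `α`, `β` the map `s` acts by `αβ`, and `|α| = 1`, `β > 0` give
`β = |αβ|` and `α = αβ / |αβ|`; interpolating these two functions on the finite spectrum of `s`
writes `e` and `h` as complex polynomials in `s`. Finally, a real endomorphism whose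
complexification is a complex polynomial in that of `g` is the real part of that polynomial in `g`.
-/

open Polynomial Module

theorem Polynomial.exists_eval_eq_on_finite {K : Type*} [Field K] {s : Set K} (hs : s.Finite)
    (φ : K → K) : ∃ P : K[X], ∀ x ∈ s, P.eval x = φ x := by
  classical
  exact ⟨Lagrange.interpolate hs.toFinset id φ, fun x hx =>
    Lagrange.eval_interpolate_at_node φ (Set.injOn_id _) (hs.mem_toFinset.2 hx)⟩

theorem Polynomial.exists_eq_map_add_C_I_mul_map (P : ℂ[X]) :
    ∃ A B : ℝ[X], P = A.map (algebraMap ℝ ℂ) + C Complex.I * B.map (algebraMap ℝ ℂ) := by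
  induction P using Polynomial.induction_on' with
  | add P Q hP hQ =>
    obtain ⟨A, B, rfl⟩ := hP
    obtain ⟨A', B', rfl⟩ := hQ
    exact ⟨A + A', B + B', by simp only [Polynomial.map_add]; ring⟩
  | monomial n z =>
    refine ⟨monomial n z.re, monomial n z.im, ?_⟩
    simp only [Polynomial.map_monomial, C_mul_monomial, ← map_add]
    congr 1
    apply Complex.ext <;> simp

theorem IsIntegral.exists_mem_adjoin_mul_eq_one {K A : Type*} [Field K] [Ring A] [Algebra K A]
    {x : A} (hi : IsIntegral K x) (hx : IsUnit x) : ∃ y ∈ Algebra.adjoin K {x}, y * x = 1 := by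
  have : Module.Finite K (Algebra.adjoin K {x}) := Algebra.finite_adjoin_simple_of_isIntegral hi
  have : IsArtinianRing (Algebra.adjoin K {x}) := isArtinian_of_tower K inferInstance
  let b : Algebra.adjoin K {x} := ⟨x, Algebra.self_mem_adjoin_singleton K x⟩
  have hb : b ∈ nonZeroDivisors (Algebra.adjoin K {x}) :=
    comap_nonZeroDivisors_le_of_injective (f := (Algebra.adjoin K {x}).val)
      Subtype.val_injective hx.mem_nonZeroDivisors
  obtain ⟨⟨b, c, -, hcb⟩, rfl⟩ := IsArtinianRing.isUnit_of_isIntegral_of_nonZeroDivisor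
    (Algebra.IsIntegral.isIntegral (R := K) b) hb
  exact ⟨c, c.2, congrArg Subtype.val hcb⟩

section Diagonalizable

variable {K V : Type*} [Field K] [AddCommGroup V] [Module K V] [FiniteDimensional K V]

theorem IsDiag.isSemisimple {f : End K V} (hf : IsDiag f) : f.IsSemisimple := by
  classical
  let P : K[X] := ∏ μ ∈ f.finite_hasEigenvalue.toFinset, (X - C μ)
  refine End.isSemisimple_of_squarefree_aeval_eq_zero
    (separable_prod_X_sub_C_iff'.2 fun _ _ _ _ h => h).squarefree (p := P) ?_
  rw [← LinearMap.ker_eq_top, eq_top_iff, ← hf]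
  refine iSup_le fun μ v hv => ?_
  obtain rfl | hv0 := eq_or_ne v 0
  · exact Submodule.zero_mem _
  have hμ : f.HasEigenvector μ v := ⟨hv, hv0⟩
  rw [LinearMap.mem_ker, End.aeval_apply_of_hasEigenvector hμ, eval_prod,
    Finset.prod_eq_zero ((Set.Finite.mem_toFinset _).2 (End.hasEigenvalue_of_hasEigenvector hμ))
      (by simp), zero_smul]

namespace Module.End

theorem mem_adjoin_of_isSemisimple_of_isNilpotent_sub [PerfectField K] {f s : End K V}
    (hs : s.IsSemisimple) (hn : IsNilpotent (f - s)) (hfs : Commute f s) :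
    s ∈ Algebra.adjoin K {f} := by
  obtain ⟨n₀, hn₀, s₀, hs₀, hn₀_nil, hs₀_ss, hf⟩ := f.exists_isNilpotent_isSemisimple
  obtain ⟨-, rfl⟩ := isNilpotent_isSemisimple_unique hn hs hn₀_nil hs₀_ss
    (hfs.sub_left (Commute.refl s))
    (Algebra.commute_of_mem_adjoin_singleton_of_commute hs₀
      (Algebra.commute_of_mem_adjoin_self hn₀).symm)
    (by rw [← hf, sub_add_cancel])
  exact hs₀

variable [IsAlgClosed K]

theorem aeval_mul_eq_right_of_commute {f g : End K V} (hfg : Commute f g)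
    (hf : f.IsSemisimple) (hg : g.IsSemisimple) {P : K[X]}
    (hP : ∀ α β, f.HasEigenvalue α → g.HasEigenvalue β → P.eval (α * β) = β) :
    aeval (f * g) P = g := by
  have hcomm : Pairwise fun i j => Commute (![f, g] i) (![f, g] j) := by
    intro i j hij
    fin_cases i <;> fin_cases j <;> simp_all [hfg.symm]
  have htop := iSup_iInf_maxGenEigenspace_eq_top_of_iSup_maxGenEigenspace_eq_top_of_commute
    ![f, g] hcomm fun i => iSup_maxGenEigenspace_eq_top _
  rw [← sub_eq_zero, ← LinearMap.ker_eq_top, eq_top_iff, ← htop]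
  refine iSup_le fun χ v hv => ?_
  obtain rfl | hv0 := eq_or_ne v 0
  · exact Submodule.zero_mem _
  have hfv : f.HasEigenvector (χ 0) v := ⟨by
    simpa [hf.isFinitelySemisimple.maxGenEigenspace_eq_eigenspace] using
      (Submodule.mem_iInf _).1 hv 0, hv0⟩
  have hgv : g.HasEigenvector (χ 1) v := ⟨by
    simpa [hg.isFinitelySemisimple.maxGenEigenspace_eq_eigenspace] using
      (Submodule.mem_iInf _).1 hv 1, hv0⟩
  have hfgv : (f * g).HasEigenvector (χ 0 * χ 1) v := ⟨by
    rw [mem_eigenspace_iff, mul_apply, hgv.apply_eq_smul, map_smul, hfv.apply_eq_smul,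
      smul_smul, mul_comm], hv0⟩
  rw [LinearMap.mem_ker, LinearMap.sub_apply, aeval_apply_of_hasEigenvector hfgv,
    hP _ _ (hasEigenvalue_of_hasEigenvector hfv) (hasEigenvalue_of_hasEigenvector hgv),
    hgv.apply_eq_smul, sub_self]

theorem mem_adjoin_mul_right_of_commute {f g : End K V} (hfg : Commute f g)
    (hf : f.IsSemisimple) (hg : g.IsSemisimple) (φ : K → K)
    (hφ : ∀ α β, f.HasEigenvalue α → g.HasEigenvalue β → φ (α * β) = β) :
    g ∈ Algebra.adjoin K {f * g} := by
  obtain ⟨P, hP⟩ := exists_eval_eq_on_finite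
    (f.finite_hasEigenvalue.image2 (fun α β : K => α * β) g.finite_hasEigenvalue) φ
  have hPg : aeval (f * g) P = g := aeval_mul_eq_right_of_commute hfg hf hg fun α β hα hβ =>
    (hP _ (Set.mem_image2_of_mem hα hβ)).trans (hφ α β hα hβ)
  simpa only [hPg] using aeval_mem_adjoin_singleton K (f * g) (p := P)

end Module.End

end Diagonalizable

section Complexification

variable {V : Type*} [AddCommGroup V] [Module ℝ V]

theorem cplx_eq_baseChangeHom (X : End ℝ V) : cplx X = End.baseChangeHom ℝ ℂ V X := rfl

theorem cplx_mul (X Y : End ℝ V) : cplx (X * Y) = cplx X * cplx Y :=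
  map_mul (End.baseChangeHom ℝ ℂ V) X Y

theorem cplx_sub (X Y : End ℝ V) : cplx (X - Y) = cplx X - cplx Y :=
  map_sub (End.baseChangeHom ℝ ℂ V) X Y

theorem cplx_tmul (X : End ℝ V) (z : ℂ) (v : V) : cplx X (z ⊗ₜ v) = z ⊗ₜ X v := rfl

theorem Commute.cplx {X Y : End ℝ V} (h : Commute X Y) : Commute (cplx X) (cplx Y) :=
  h.map (End.baseChangeHom ℝ ℂ V)

theorem IsNilpotent.cplx {X : End ℝ V} (h : IsNilpotent X) : IsNilpotent (cplx X) :=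
  h.map (End.baseChangeHom ℝ ℂ V)

theorem aeval_cplx (X : End ℝ V) (p : ℝ[X]) : aeval (cplx X) p = cplx (aeval X p) := by
  rw [cplx_eq_baseChangeHom, aeval_algHom_apply, cplx_eq_baseChangeHom]

theorem mem_adjoin_of_cplx_mem_adjoin {X Y : End ℝ V}
    (h : cplx X ∈ Algebra.adjoin ℂ {cplx Y}) : X ∈ Algebra.adjoin ℝ {Y} := by
  obtain ⟨P, hP⟩ := Algebra.adjoin_mem_exists_aeval ℂ (cplx Y) h
  obtain ⟨A, B, rfl⟩ := P.exists_eq_map_add_C_I_mul_map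
  simp only [map_add, map_mul, aeval_C, aeval_map_algebraMap, aeval_cplx] at hP
  let re : ℂ ⊗[ℝ] V →ₗ[ℝ] V := TensorProduct.lid ℝ V ∘ₗ Complex.reLm.rTensor V
  suffices X = aeval Y A from this ▸ aeval_mem_adjoin_singleton ℝ Y
  ext v
  simpa [re, Algebra.algebraMap_eq_smul_one, cplx_tmul, TensorProduct.smul_tmul'] using
    congr(re ($hP.symm (1 ⊗ₜ v)))

theorem mem_adjoin_of_isSemisimple_cplx_of_isNilpotent_sub [FiniteDimensional ℝ V]
    {X S : End ℝ V} (hS : (cplx S).IsSemisimple) (hn : IsNilpotent (X - S))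
    (hXS : Commute X S) : S ∈ Algebra.adjoin ℝ {X} :=
  mem_adjoin_of_cplx_mem_adjoin <| End.mem_adjoin_of_isSemisimple_of_isNilpotent_sub hS
    (cplx_sub X S ▸ hn.cplx) hXS.cplx

end Complexification

section JordanComponents

variable {V : Type*} [AddCommGroup V] [Module ℝ V] {e h : End ℝ V}

theorem IsMultHyperbolic.ofReal_norm_mul_eq (he : IsMultElliptic e) (hh : IsMultHyperbolic h)
    {α β : ℂ} (hα : (cplx e).HasEigenvalue α) (hβ : (cplx h).HasEigenvalue β) :
    (‖α * β‖ : ℂ) = β := by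
  obtain ⟨hβ_im, hβ_re⟩ := hh.2 β hβ
  have hβ_real : β = (β.re : ℂ) := Complex.ext rfl (by simp [hβ_im])
  rw [norm_mul, he.2 α hα, one_mul, hβ_real, Complex.norm_real, Real.norm_of_nonneg hβ_re.le]

variable [FiniteDimensional ℝ V]

theorem IsMultElliptic.mem_adjoin_mul (he : IsMultElliptic e) (hh : IsMultHyperbolic h)
    (heh : Commute e h) : e ∈ Algebra.adjoin ℝ {e * h} := by
  refine mem_adjoin_of_cplx_mem_adjoin ?_
  rw [cplx_mul, heh.cplx.eq]
  refine End.mem_adjoin_mul_right_of_commute heh.cplx.symm hh.1.isSemisimple he.1.isSemisimple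
    (fun z => z / ‖z‖) fun β α hβ hα => ?_
  have hβ0 : β ≠ 0 := fun h0 => (hh.2 β hβ).2.ne' (by simp [h0])
  rw [mul_comm, hh.ofReal_norm_mul_eq he hα hβ, mul_div_cancel_right₀ α hβ0]

theorem IsMultHyperbolic.mem_adjoin_mul (he : IsMultElliptic e) (hh : IsMultHyperbolic h)
    (heh : Commute e h) : h ∈ Algebra.adjoin ℝ {e * h} := by
  refine mem_adjoin_of_cplx_mem_adjoin ?_
  rw [cplx_mul]
  exact End.mem_adjoin_mul_right_of_commute heh.cplx he.1.isSemisimple hh.1.isSemisimple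
    (fun z => ‖z‖) fun α β hα hβ => hh.ofReal_norm_mul_eq he hα hβ

end JordanComponents

theorem multiplicative_jordan_components_are_polynomials
    {V : Type*} [AddCommGroup V] [Module ℝ V] [FiniteDimensional ℝ V]
    (g e h u : Module.End ℝ V) (hg : IsUnit g)
    (heh : Commute e h) (heu : Commute e u) (hhu : Commute h u)
    (he : IsMultElliptic e) (hh : IsMultHyperbolic h) (hu : IsNilpotent (u - 1))
    (hgd : g = e * h * u) :
    ∃ p q r : Polynomial ℝ,
      e = Polynomial.aeval g p ∧ h = Polynomial.aeval g q ∧ u = Polynomial.aeval g r := by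
  have hsu : Commute (e * h) u := heu.mul_left hhu
  have hs_g : e * h ∈ Algebra.adjoin ℝ {g} := by
    refine mem_adjoin_of_isSemisimple_cplx_of_isNilpotent_sub ?_ ?_ ?_
    · rw [cplx_mul]
      exact he.1.isSemisimple.mul_of_commute heh.cplx hh.1.isSemisimple
    · rw [hgd, ← mul_sub_one]
      exact (hsu.sub_right (Commute.one_right _)).isNilpotent_mul_left hu
    · rw [hgd]
      exact (Commute.refl _).mul_left hsu.symm
  have hu_g : u ∈ Algebra.adjoin ℝ {g} := by
    obtain ⟨t, ht, hts⟩ :=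
      (Algebra.IsIntegral.isIntegral (R := ℝ) (e * h)).exists_mem_adjoin_mul_eq_one
        (isUnit_of_mul_isUnit_left (hgd ▸ hg))
    rw [show u = t * g by rw [hgd, ← mul_assoc, hts, one_mul]]
    exact mul_mem (Algebra.adjoin_singleton_le hs_g ht) (Algebra.self_mem_adjoin_singleton ℝ g)
  obtain ⟨p, hp⟩ := Algebra.adjoin_mem_exists_aeval ℝ g
    (Algebra.adjoin_singleton_le hs_g (he.mem_adjoin_mul hh heh))
  obtain ⟨q, hq⟩ := Algebra.adjoin_mem_exists_aeval ℝ g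
    (Algebra.adjoin_singleton_le hs_g (hh.mem_adjoin_mul he heh))
  obtain ⟨r, hr⟩ := Algebra.adjoin_mem_exists_aeval ℝ g hu_g
  exact ⟨p, q, r, hp.symm, hq.symm, hr.symm⟩
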